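/- Let Q be a probability measure on (S³)^q, the q-fold product of the unit sphere in ℝ⁴, representing a random object Y = ([X¹], …, [X^q]) on (ℝP³)^q, and suppose that for each s = 1, …, q the matrix E[X^s (X^s)ᵀ] = ∫ x_s x_sᵀ Q(dx) has a simple smallest eigenvalue λ_s(1) with unit eigenvector γ_s(1). Then the Fréchet function F(p₁,…,p_q) = ∫ Σ_{s=1}^q ‖p_s p_sᵀ − x_s x_sᵀ‖₀² Q(dx) over q-tuples of unit vectors is maximized exactly at the tuples (ε₁ γ₁(1), …, ε_q γ_q(1)) with ε_s ∈ {+1, −1}; that is, the VW antimean of Q on (ℝP³)^q is the unique point αμ_{j_q} = ([γ₁(1)], …, [γ_q(1)]). -/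

import Mathlib

open Matrix MeasureTheory

/-! For unit vectors `‖ppᵀ - xxᵀ‖₀² = 2 - 2 (p ⬝ x)²`, so integrating gives
`F(p) = 2q - 2 ∑ₛ pₛ ⬝ Eₛ pₛ`, and maximizing `F` means minimizing every quadratic form
`pₛ ⬝ Eₛ pₛ` on the unit sphere. Since `Eₛ - λₛ I` is positive semidefinite, that form is at
least `λₛ`, with equality exactly when `Eₛ pₛ = λₛ pₛ`; simplicity of `λₛ` then forces
`pₛ = ±γₛ`. -/

section TraceIdentity

variable {n R : Type*} [Fintype n] [CommRing R]

lemma trace_vecMulVec_self_mul_vecMulVec_self (a b : n → R) :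
    trace (vecMulVec a a * vecMulVec b b) = (a ⬝ᵥ b) ^ 2 := by
  rw [vecMulVec_mul_vecMulVec, trace_vecMulVec, dotProduct_smul, smul_eq_mul, sq]

lemma trace_sub_vecMulVec_self_mul_self (a b : n → R) :
    trace ((vecMulVec a a - vecMulVec b b) * (vecMulVec a a - vecMulVec b b)) =
      (a ⬝ᵥ a) ^ 2 + (b ⬝ᵥ b) ^ 2 - 2 * (a ⬝ᵥ b) ^ 2 := by
  simp only [sub_mul, mul_sub, trace_sub, trace_vecMulVec_self_mul_vecMulVec_self,
    dotProduct_comm b a]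
  ring

end TraceIdentity

section SecondMoment

variable {α n : Type*} [MeasurableSpace α] [Fintype n] {μ : Measure α}

lemma abs_apply_le_one_of_dotProduct_self_eq_one {v : n → ℝ} (hv : v ⬝ᵥ v = 1) (i : n) :
    |v i| ≤ 1 := by
  rw [abs_le_one_iff_mul_self_le_one, ← hv]
  exact Finset.single_le_sum (fun k _ => mul_self_nonneg (v k)) (Finset.mem_univ i)

lemma integrable_mul_apply_of_dotProduct_self_eq_one [IsFiniteMeasure μ] {f : α → n → ℝ}
    (hf : Measurable f) (hunit : ∀ x, f x ⬝ᵥ f x = 1) (i j : n) :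
    Integrable (fun x => f x i * f x j) μ :=
  Integrable.of_bound
    (((measurable_pi_apply i).comp hf).mul ((measurable_pi_apply j).comp hf)).aestronglyMeasurable
    1 <| ae_of_all _ fun x => by
      rw [Real.norm_eq_abs, abs_mul]
      exact mul_le_one₀ (abs_apply_le_one_of_dotProduct_self_eq_one (hunit x) i) (abs_nonneg _)
        (abs_apply_le_one_of_dotProduct_self_eq_one (hunit x) j)

lemma dotProduct_sq_eq_sum (p v : n → ℝ) :
    (p ⬝ᵥ v) ^ 2 = ∑ i, ∑ j, p i * p j * (v i * v j) := by
  rw [sq, dotProduct, Finset.sum_mul_sum]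
  exact Finset.sum_congr rfl fun i _ => Finset.sum_congr rfl fun j _ => by ring

variable {f : α → n → ℝ}

lemma integrable_dotProduct_sq (hf : ∀ i j, Integrable (fun x => f x i * f x j) μ)
    (p : n → ℝ) : Integrable (fun x => (p ⬝ᵥ f x) ^ 2) μ := by
  simp only [dotProduct_sq_eq_sum]
  exact integrable_finsetSum _ fun i _ => integrable_finsetSum _ fun j _ =>
    (hf i j).const_mul _

lemma integral_dotProduct_sq (hf : ∀ i j, Integrable (fun x => f x i * f x j) μ)
    {M : Matrix n n ℝ} (hM : ∀ i j, M i j = ∫ x, f x i * f x j ∂μ) (p : n → ℝ) :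
    ∫ x, (p ⬝ᵥ f x) ^ 2 ∂μ = p ⬝ᵥ (M *ᵥ p) := by
  simp only [dotProduct_sq_eq_sum]
  rw [integral_finsetSum _ fun i _ => integrable_finsetSum _ fun j _ => (hf i j).const_mul _]
  simp only [integral_finsetSum _ fun j _ => (hf _ j).const_mul _, integral_const_mul, ← hM,
    dotProduct, mulVec, Finset.mul_sum]
  exact Finset.sum_congr rfl fun i _ => Finset.sum_congr rfl fun j _ => by ring

end SecondMoment

lemma integral_sum_trace_sub_vecMulVec_sq {ι n : Type*} [Fintype ι] [Fintype n]
    (Q : Measure (ι → {x : n → ℝ // x ⬝ᵥ x = 1})) [IsProbabilityMeasure Q]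
    (E : ι → Matrix n n ℝ) (hE : ∀ s i j, E s i j = ∫ x, ((x s).1 i) * ((x s).1 j) ∂Q)
    (p : ι → n → ℝ) (hp : ∀ s, p s ⬝ᵥ p s = 1) :
    (∫ x, (∑ s, trace ((vecMulVec (p s) (p s) - vecMulVec (x s).1 (x s).1) *
        (vecMulVec (p s) (p s) - vecMulVec (x s).1 (x s).1))) ∂Q)
      = 2 * Fintype.card ι - 2 * ∑ s, p s ⬝ᵥ (E s *ᵥ p s) := by
  have hmom : ∀ s i j, Integrable (fun x : ι → {x : n → ℝ // x ⬝ᵥ x = 1} =>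
      (x s).1 i * (x s).1 j) Q := fun s =>
    integrable_mul_apply_of_dotProduct_self_eq_one
      (measurable_subtype_coe.comp (measurable_pi_apply s)) (fun x => (x s).2)
  have htrace : ∀ x : ι → {x : n → ℝ // x ⬝ᵥ x = 1}, ∀ s,
      trace ((vecMulVec (p s) (p s) - vecMulVec (x s).1 (x s).1) *
        (vecMulVec (p s) (p s) - vecMulVec (x s).1 (x s).1)) = 2 - 2 * (p s ⬝ᵥ (x s).1) ^ 2 := by
    intro x s
    rw [trace_sub_vecMulVec_self_mul_self, hp s, (x s).2]
    ring
  simp only [htrace]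
  rw [integral_finsetSum _ fun s _ => by
    exact (integrable_const 2).sub ((integrable_dotProduct_sq (hmom s) (p s)).const_mul 2)]
  simp only [integral_sub (integrable_const _) ((integrable_dotProduct_sq (hmom _) _).const_mul 2),
    integral_const, integral_const_mul, integral_dotProduct_sq (hmom _) (hE _), probReal_univ,
    one_smul, Finset.sum_sub_distrib, Finset.sum_const, Finset.card_univ, nsmul_eq_mul,
    ← Finset.mul_sum]
  ring

section Rayleigh

variable {n : Type*} [Fintype n] [DecidableEq n] {A : Matrix n n ℝ} {lam : ℝ}

lemma Matrix.IsHermitian.posSemidef_sub_smul_one (hA : A.IsHermitian)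
    (hmin : ∀ (c : ℝ) (w : n → ℝ), w ≠ 0 → A *ᵥ w = c • w → lam ≤ c) :
    (A - lam • 1).PosSemidef := by
  have hB : (A - lam • 1).IsHermitian := hA.sub (isHermitian_one.smul (IsSelfAdjoint.all lam))
  refine hB.posSemidef_iff_eigenvalues_nonneg.2 fun j => ?_
  set v : n → ℝ := ⇑(hB.eigenvectorBasis j)
  have hv : v ≠ 0 := fun h => hB.eigenvectorBasis.orthonormal.ne_zero j
    ((WithLp.ofLp_eq_zero 2).1 h)
  have hAv : A *ᵥ v = (hB.eigenvalues j + lam) • v := by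
    have h := hB.mulVec_eigenvectorBasis j
    rw [sub_mulVec, smul_mulVec, one_mulVec, sub_eq_iff_eq_add] at h
    rw [h, add_smul]
  simpa using hmin _ v hv hAv

lemma dotProduct_sub_smul_one_mulVec (w : n → ℝ) :
    w ⬝ᵥ ((A - lam • 1) *ᵥ w) = w ⬝ᵥ (A *ᵥ w) - lam * (w ⬝ᵥ w) := by
  rw [sub_mulVec, smul_mulVec, one_mulVec, dotProduct_sub, dotProduct_smul, smul_eq_mul]

lemma Matrix.IsHermitian.le_dotProduct_mulVec (hA : A.IsHermitian)
    (hmin : ∀ (c : ℝ) (w : n → ℝ), w ≠ 0 → A *ᵥ w = c • w → lam ≤ c)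
    {w : n → ℝ} (hw : w ⬝ᵥ w = 1) : lam ≤ w ⬝ᵥ (A *ᵥ w) := by
  have h := (hA.posSemidef_sub_smul_one hmin).dotProduct_mulVec_nonneg w
  rw [star_trivial, dotProduct_sub_smul_one_mulVec, hw] at h
  linarith

lemma Matrix.IsHermitian.mulVec_eq_smul_of_dotProduct_mulVec_eq (hA : A.IsHermitian)
    (hmin : ∀ (c : ℝ) (w : n → ℝ), w ≠ 0 → A *ᵥ w = c • w → lam ≤ c)
    {w : n → ℝ} (hw : w ⬝ᵥ w = 1) (heq : w ⬝ᵥ (A *ᵥ w) = lam) : A *ᵥ w = lam • w := by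
  have h := (hA.posSemidef_sub_smul_one hmin).dotProduct_mulVec_zero_iff w
  rw [star_trivial, dotProduct_sub_smul_one_mulVec, hw, heq, mul_one, sub_self, sub_mulVec,
    smul_mulVec, one_mulVec, sub_eq_zero] at h
  exact h.1 rfl

end Rayleigh

lemma smul_dotProduct_smul_self_eq_one_iff {n : Type*} [Fintype n] {γ : n → ℝ}
    (hγ : γ ⬝ᵥ γ = 1) (c : ℝ) : (c • γ) ⬝ᵥ (c • γ) = 1 ↔ c = 1 ∨ c = -1 := by
  rw [smul_dotProduct, dotProduct_smul, hγ, smul_eq_mul, smul_eq_mul, mul_one]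
  exact mul_self_eq_one_iff

lemma Matrix.IsHermitian.dotProduct_mulVec_eq_iff_eq_sign_smul {n : Type*} [Fintype n]
    [DecidableEq n] {A : Matrix n n ℝ} {lam : ℝ} {γ : n → ℝ} (hA : A.IsHermitian)
    (hmin : ∀ (c : ℝ) (w : n → ℝ), w ≠ 0 → A *ᵥ w = c • w → lam ≤ c)
    (hsimple : ∀ w : n → ℝ, A *ᵥ w = lam • w → ∃ c : ℝ, w = c • γ)
    (hγ : γ ⬝ᵥ γ = 1) (heig : A *ᵥ γ = lam • γ) {w : n → ℝ} (hw : w ⬝ᵥ w = 1) :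
    w ⬝ᵥ (A *ᵥ w) = lam ↔ ∃ ε : ℝ, (ε = 1 ∨ ε = -1) ∧ w = ε • γ := by
  constructor
  · intro heq
    obtain ⟨c, rfl⟩ := hsimple w (hA.mulVec_eq_smul_of_dotProduct_mulVec_eq hmin hw heq)
    exact ⟨c, (smul_dotProduct_smul_self_eq_one_iff hγ c).1 hw, rfl⟩
  · rintro ⟨ε, hε, rfl⟩
    rw [mulVec_smul, heig, smul_comm, dotProduct_smul, hw, smul_eq_mul, mul_one]

lemma forall_sum_le_sum_iff {ι X : Type*} [Fintype ι] {S : Set X} {g : ι → X → ℝ} {m : ι → ℝ}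
    (hm : ∀ s, ∀ x ∈ S, m s ≤ g s x) {γ : ι → X} (hγS : ∀ s, γ s ∈ S)
    (hγ : ∀ s, g s (γ s) = m s) {p : ι → X} (hp : ∀ s, p s ∈ S) :
    (∀ r : ι → X, (∀ s, r s ∈ S) → ∑ s, g s (p s) ≤ ∑ s, g s (r s)) ↔
      ∀ s, g s (p s) = m s := by
  constructor
  · intro hle s
    have hsum : ∑ s, g s (p s) ≤ ∑ s, m s := by simpa only [hγ] using hle γ hγS
    have hle_p : ∀ s ∈ Finset.univ, m s ≤ g s (p s) := fun s _ => hm s _ (hp s)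
    have heq := (Finset.sum_eq_sum_iff_of_le hle_p).1 (le_antisymm (Finset.sum_le_sum hle_p) hsum)
    exact (heq s (Finset.mem_univ s)).symm
  · intro heq r hr
    simp only [heq]
    exact Finset.sum_le_sum fun s _ => hm s _ (hr s)

/-- Let `Q` be a probability measure on `(S³)^q` representing a random
object on `(ℝP³)^q`, and suppose for each `s` the second moment matrix
`E s = ∫ x_s x_sᵀ dQ` has a simple smallest eigenvalue `λ_s(1)` with unit eigenvector
`γ_s(1)`. Then the Fréchet function `F(p) = ∫ Σ_s ‖p_s p_sᵀ - x_s x_sᵀ‖₀² dQ` over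
`q`-tuples of unit vectors is maximized exactly at the tuples `(ε₁ γ₁(1), …, ε_q γ_q(1))`
with `ε_s ∈ {±1}`; i.e. the VW antimean of `Q` is `([γ₁(1)], …, [γ_q(1)])`. -/
theorem vw_antimean_projective_shape (q : ℕ)
    (Q : Measure (Fin q → {x : Fin 4 → ℝ // x ⬝ᵥ x = 1})) [IsProbabilityMeasure Q]
    (E : Fin q → Matrix (Fin 4) (Fin 4) ℝ)
    (hE : ∀ s i j, E s i j = ∫ x, ((x s).1 i) * ((x s).1 j) ∂Q)
    (lam : Fin q → ℝ) (γ : Fin q → Fin 4 → ℝ)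
    (hγ : ∀ s, γ s ⬝ᵥ γ s = 1) (heig : ∀ s, E s *ᵥ γ s = lam s • γ s)
    (hmin : ∀ s, ∀ (c : ℝ) (w : Fin 4 → ℝ), w ≠ 0 → E s *ᵥ w = c • w → lam s ≤ c)
    (hsimple : ∀ s, ∀ w : Fin 4 → ℝ, E s *ᵥ w = lam s • w → ∃ c : ℝ, w = c • γ s) :
    {p : Fin q → Fin 4 → ℝ | (∀ s, p s ⬝ᵥ p s = 1) ∧
        ∀ r : Fin q → Fin 4 → ℝ, (∀ s, r s ⬝ᵥ r s = 1) →
          (∫ x, (∑ s, Matrix.trace ((vecMulVec (r s) (r s) - vecMulVec (x s).1 (x s).1) *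
              (vecMulVec (r s) (r s) - vecMulVec (x s).1 (x s).1))) ∂Q)
            ≤ ∫ x, (∑ s, Matrix.trace ((vecMulVec (p s) (p s) - vecMulVec (x s).1 (x s).1) *
              (vecMulVec (p s) (p s) - vecMulVec (x s).1 (x s).1))) ∂Q}
      = {p : Fin q → Fin 4 → ℝ | ∃ ε : Fin q → ℝ, (∀ s, ε s = 1 ∨ ε s = -1) ∧
          p = fun s => ε s • γ s} := by
  have hE_herm : ∀ s, (E s).IsHermitian := fun s => by
    ext i j
    simp only [conjTranspose_apply, star_trivial, hE]
    exact integral_congr_ae (ae_of_all _ fun x => mul_comm _ _)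
  have hγ_min : ∀ s, γ s ⬝ᵥ (E s *ᵥ γ s) = lam s := fun s => by
    rw [heig, dotProduct_smul, hγ, smul_eq_mul, mul_one]
  have hsign : ∀ s {w : Fin 4 → ℝ}, w ⬝ᵥ w = 1 →
      (w ⬝ᵥ (E s *ᵥ w) = lam s ↔ ∃ ε : ℝ, (ε = 1 ∨ ε = -1) ∧ w = ε • γ s) := fun s _ hw =>
    (hE_herm s).dotProduct_mulVec_eq_iff_eq_sign_smul (hmin s) (hsimple s) (hγ s) (heig s) hw
  have hF := integral_sum_trace_sub_vecMulVec_sq Q E hE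
  ext p
  have hmin_iff := forall_sum_le_sum_iff (S := {w | w ⬝ᵥ w = 1}) (p := p)
    (fun s _ hw => (hE_herm s).le_dotProduct_mulVec (hmin s) hw) hγ hγ_min
  simp only [Set.mem_ofPred_eq]
  constructor
  · rintro ⟨hp, hmax⟩
    have hp_min := (hmin_iff hp).1 fun r hr => by
      have := hmax r hr
      rw [hF r hr, hF p hp] at this
      linarith
    choose ε hε hpε using fun s => (hsign s (hp s)).1 (hp_min s)
    exact ⟨ε, hε, funext hpε⟩
  · rintro ⟨ε, hε, rfl⟩
    have hp : ∀ s, (ε s • γ s) ⬝ᵥ (ε s • γ s) = 1 := fun s =>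
      (smul_dotProduct_smul_self_eq_one_iff (hγ s) (ε s)).2 (hε s)
    refine ⟨hp, fun r hr => ?_⟩
    have := (hmin_iff hp).2 (fun s => (hsign s (hp s)).2 ⟨ε s, hε s, rfl⟩) r hr
    rw [hF r hr, hF _ hp]
    linarith
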